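/- arXiv:1402.3746 — 5 statements merged into one kernel-verified Lean document; each statement's English description precedes it below -/
import Mathlib

section
/- For integers m ≥ 2 and 1 ≤ j < m, the sum ∑_{r=1}^{m} (1/2 - r/m) sin(2πjr/m) equals (1/2)·cot(πj/m). -/
/-!
With `z = exp (2πij/m)`, an `m`-th root of unity different from `1`, the sum is the imaginary
part of `∑_{r<m} (1/2 - r/m) z^r`. Since `∑ z^r = 0` and `∑ r z^r = m/(z-1)`, this complex sum
equals `-1/(z-1) = (1 + i cot (πj/m))/2`.
-/

open Finset Complex

theorem Finset.sum_Icc_one_eq_sum_range {M : Type*} [AddCommMonoid M] {f : ℕ → M} {m : ℕ}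
    (h0 : f 0 = 0) (hm : f m = 0) : ∑ r ∈ Icc 1 m, f r = ∑ r ∈ range m, f r := by
  rw [← zero_add (∑ r ∈ Icc 1 m, f r), ← h0, ← sum_insert (by simp),
    show insert 0 (Icc 1 m) = Icc 0 m from insert_Icc_add_one_left_eq_Icc m.zero_le,
    ← Ico_add_one_right_eq_Icc, ← range_eq_Ico, sum_range_succ, hm, add_zero]

theorem mul_sum_range_natCast_mul_pow {R : Type*} [CommRing R] (z : R) (m : ℕ) :
    (z - 1) * ∑ r ∈ range m, (r : R) * z ^ r =
      (m - 1) * z ^ m - ∑ r ∈ range m, z ^ r + 1 := by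
  induction m with
  | zero => simp
  | succ n ih =>
    rw [sum_range_succ, mul_add, ih, sum_range_succ _ n]
    push_cast
    ring

section RootOfUnity

variable {K : Type*} [Field K] {z : K} {m : ℕ}

theorem geom_sum_eq_zero_of_pow_eq_one (hz : z ≠ 1) (hzm : z ^ m = 1) :
    ∑ r ∈ range m, z ^ r = 0 := by
  rw [geom_sum_eq hz, hzm, sub_self, zero_div]

theorem sum_range_natCast_mul_pow_of_pow_eq_one (hz : z ≠ 1) (hzm : z ^ m = 1) :
    ∑ r ∈ range m, (r : K) * z ^ r = m / (z - 1) := by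
  rw [eq_div_iff (sub_ne_zero.mpr hz), mul_comm, mul_sum_range_natCast_mul_pow,
    geom_sum_eq_zero_of_pow_eq_one hz hzm, hzm]
  ring

theorem sum_range_half_sub_div_mul_pow_of_pow_eq_one [CharZero K] (hm : m ≠ 0) (hz : z ≠ 1)
    (hzm : z ^ m = 1) : ∑ r ∈ range m, (1 / 2 - r / m : K) * z ^ r = -(z - 1)⁻¹ := by
  simp only [sub_mul, sum_sub_distrib, ← mul_sum, div_mul_eq_mul_div, ← sum_div,
    geom_sum_eq_zero_of_pow_eq_one hz hzm, sum_range_natCast_mul_pow_of_pow_eq_one hz hzm]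
  field_simp
  ring

end RootOfUnity

theorem Complex.neg_inv_exp_sub_one {x : ℂ} (h : exp (2 * I * x) ≠ 1) :
    -(exp (2 * I * x) - 1)⁻¹ = (1 + cot x * I) / 2 := by
  rw [cot_eq_exp_ratio]
  have : exp (2 * I * x) - 1 ≠ 0 := sub_ne_zero.mpr h
  have : 1 - exp (2 * I * x) ≠ 0 := sub_ne_zero.mpr h.symm
  field_simp
  ring_nf

theorem sin_sum_identity_general (m j : ℕ) (hj1 : 1 ≤ j) (hjm : j < m) :
    ∑ r ∈ Finset.Icc 1 m, ((1 : ℝ) / 2 - (r : ℝ) / m) *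
      Real.sin (2 * Real.pi * j * r / m) = (1 / 2) * Real.cot (Real.pi * j / m) := by
  have hm0 : m ≠ 0 := by omega
  set ζ := exp (2 * Real.pi * I / m)
  have hζ : IsPrimitiveRoot ζ m := isPrimitiveRoot_exp m hm0
  have hpow (n : ℕ) : ζ ^ n = exp (↑(2 * Real.pi * n / m) * I) := by
    rw [← exp_nat_mul]; push_cast; ring_nf
  have hz1 : ζ ^ j ≠ 1 := hζ.pow_ne_one_of_pos_of_lt (by omega) hjm
  have hzm : (ζ ^ j) ^ m = 1 := by rw [← pow_mul, mul_comm, pow_mul, hζ.pow_eq_one, one_pow]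
  have hz : ζ ^ j = exp (2 * I * ↑(Real.pi * j / m)) := by rw [hpow]; push_cast; ring_nf
  calc ∑ r ∈ Icc 1 m, ((1 : ℝ) / 2 - r / m) * Real.sin (2 * Real.pi * j * r / m)
      = ∑ r ∈ range m, ((1 : ℝ) / 2 - r / m) * Real.sin (2 * Real.pi * j * r / m) := by
        refine sum_Icc_one_eq_sum_range (by simp) ?_
        have : 2 * Real.pi * j * m / m = (2 * j : ℕ) * Real.pi := by push_cast; field_simp
        rw [this, Real.sin_nat_mul_pi, mul_zero]
    _ = (∑ r ∈ range m, (1 / 2 - r / m : ℂ) * (ζ ^ j) ^ r).im := by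
        rw [im_sum]
        refine sum_congr rfl fun r _ => ?_
        have hcoef : (1 / 2 - r / m : ℂ) = ((1 / 2 - r / m : ℝ) : ℂ) := by push_cast; rfl
        rw [← pow_mul, hpow, hcoef, im_ofReal_mul, exp_ofReal_mul_I_im]
        push_cast
        ring_nf
    _ = (1 / 2) * Real.cot (Real.pi * j / m) := by
        rw [sum_range_half_sub_div_mul_pow_of_pow_eq_one hm0 hz1 hzm, hz,
          neg_inv_exp_sub_one (hz ▸ hz1), ← ofReal_cot, div_ofNat_im, add_im, one_im, mul_I_im,
          ofReal_re]
        ring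

theorem sin_sum_identity (m j : ℕ) (hm : 2 ≤ m) (hj1 : 1 ≤ j) (hjm : j < m) :
    ∑ r ∈ Finset.Icc 1 m, ((1 : ℝ) / 2 - (r : ℝ) / m) *
      Real.sin (2 * Real.pi * j * r / m) = (1 / 2) * Real.cot (Real.pi * j / m) :=
  sin_sum_identity_general m j hj1 hjm
end

section
/- For integers m ≥ 2 and 1 ≤ ℓ ≤ m-1, the sum ∑_{j=1}^{m-1} cot(πj/m)·sin(2πjℓ/m) equals m - 2ℓ. -/
open Finset Real

lemma cos_mul_sin_telescope (x : ℝ) (n : ℕ) :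
    Real.cos x * Real.sin (2*n*x) =
      Real.sin x * ∑ k ∈ Finset.range n, (Real.cos (2*k*x) + Real.cos (2*(k+1)*x)) := by
  induction n with
  | zero => simp
  | succ n ih =>
    rw [Finset.sum_range_succ]
    push_cast
    have h1 : 2*((n:ℝ)+1)*x = 2*n*x + 2*x := by ring
    rw [h1, Real.sin_add, Real.cos_add, Real.sin_two_mul, Real.cos_two_mul]
    push_cast at ih
    linear_combination ih + 2*Real.cos x*Real.sin (2*(n:ℝ)*x) * Real.sin_sq_add_cos_sq x

lemma sum_cos_eq_neg_one (m k : ℕ) (hm : 2 ≤ m) (hk1 : 1 ≤ k) (hk : k ≤ m - 1) :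
    ∑ j ∈ Finset.Icc 1 (m-1), Real.cos (2*k*(π*j/m)) = -1 := by
  have hm0 : (m:ℝ) ≠ 0 := by positivity
  have hmC : (m:ℂ) ≠ 0 := by exact_mod_cast (by positivity : (m:ℝ) ≠ 0)
  set θ : ℝ := 2*π*k/m with hθ
  set ζ : ℂ := Complex.exp (θ * Complex.I) with hζ
  have hzj : ∀ j : ℕ, (ζ^j).re = Real.cos (2*k*(π*j/m)) := by
    intro j
    have h1 : ζ^j = Complex.exp (((2*k*(π*j/m) : ℝ) : ℂ) * Complex.I) := by
      rw [hζ, ← Complex.exp_nat_mul]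
      congr 1
      push_cast [hθ]
      field_simp
    rw [h1, Complex.exp_ofReal_mul_I_re]
  have hne : ζ ≠ 1 := by
    intro h
    rw [hζ, Complex.exp_eq_one_iff] at h
    obtain ⟨n, hn⟩ := h
    have h2 : (θ:ℂ) = n*(2*π) :=
      mul_right_cancel₀ Complex.I_ne_zero
        (hn.trans (by ring : (n:ℂ)*(2*π*Complex.I) = (n*(2*π))*Complex.I))
    have h3 : θ = n*(2*π) := by exact_mod_cast h2
    rw [hθ] at h3
    have h4 : (k:ℝ) = n*m := by
      field_simp at h3
      nlinarith [Real.pi_pos]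
    have h5 : (k:ℤ) = n*m := by exact_mod_cast h4
    have hkm : k < m := by omega
    have hkmZ : (k:ℤ) < m := by exact_mod_cast hkm
    have h1Z : (1:ℤ) ≤ k := by exact_mod_cast hk1
    have hmZ : (2:ℤ) ≤ m := by exact_mod_cast hm
    rcases le_or_gt n 0 with h | h
    · nlinarith
    · nlinarith
  have hζm : ζ^m = 1 := by
    rw [hζ, ← Complex.exp_nat_mul]
    have : (m:ℂ) * (θ * Complex.I) = (k:ℤ) * (2*π*Complex.I) := by
      push_cast [hθ]
      field_simp
    rw [this, Complex.exp_int_mul_two_pi_mul_I]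
  have hgeom : ∑ j ∈ Finset.range m, ζ^j = 0 := by
    rw [geom_sum_eq hne, hζm]
    simp
  have hsum0 : ∑ j ∈ Finset.range m, Real.cos (2*k*(π*j/m)) = 0 := by
    have := congrArg Complex.re hgeom
    rw [Complex.re_sum] at this
    simp only [hzj] at this
    simpa using this
  have hrange : Finset.range m = insert 0 (Finset.Icc 1 (m-1)) := by
    ext x; simp; omega
  rw [hrange, Finset.sum_insert (by simp)] at hsum0
  simp only [Nat.cast_zero, mul_zero, zero_div, mul_zero, Real.cos_zero] at hsum0
  linarith


theorem cot_sin_sum (m l : ℕ) (hm : 2 ≤ m) (hl1 : 1 ≤ l) (hlm : l ≤ m - 1) :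
    ∑ j ∈ Finset.Icc 1 (m - 1), Real.cot (Real.pi * j / m) *
      Real.sin (2 * Real.pi * j * l / m) = (m : ℝ) - 2 * l := by
  have hm0 : (0:ℝ) < m := by positivity
  have hstep : ∀ j ∈ Finset.Icc 1 (m-1),
      Real.cot (π*j/m) * Real.sin (2*π*j*l/m)
        = ∑ k ∈ Finset.range l, (Real.cos (2*k*(π*j/m)) + Real.cos (2*(k+1)*(π*j/m))) := by
    intro j hj
    simp only [Finset.mem_Icc] at hj
    have hj1 : (1:ℝ) ≤ j := by exact_mod_cast hj.1
    have hjm : (j:ℝ) < m := by exact_mod_cast (by omega : j < m)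
    have hx0 : 0 < π*j/m := by
      apply div_pos (by nlinarith [Real.pi_pos]) hm0
    have hxπ : π*j/m < π := by
      rw [div_lt_iff₀ hm0]
      nlinarith [Real.pi_pos]
    have hs : Real.sin (π*j/m) ≠ 0 := ne_of_gt (Real.sin_pos_of_pos_of_lt_pi hx0 hxπ)
    have harg : 2*π*(j:ℝ)*l/m = 2*(l:ℝ)*(π*j/m) := by ring
    rw [harg, Real.cot_eq_cos_div_sin, div_mul_eq_mul_div,
      cos_mul_sin_telescope (π*j/m) l, mul_div_cancel_left₀ _ hs]
  rw [Finset.sum_congr rfl hstep, Finset.sum_comm]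
  simp only [Finset.sum_add_distrib]
  set S : ℕ → ℝ := fun k => ∑ j ∈ Finset.Icc 1 (m-1), Real.cos (2*k*(π*j/m)) with hS
  have hS0 : S 0 = (m:ℝ) - 1 := by
    simp only [hS, Nat.cast_zero, mul_zero, zero_mul, Real.cos_zero]
    rw [Finset.sum_const, Nat.card_Icc]
    have : m - 1 + 1 - 1 = m - 1 := by omega
    rw [this, nsmul_eq_mul, Nat.cast_sub (by omega : 1 ≤ m)]
    push_cast
    ring
  have hSk : ∀ k, 1 ≤ k → k ≤ m-1 → S k = -1 := fun k h1 h2 =>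
    sum_cos_eq_neg_one m k hm h1 h2
  have e1 : ∑ k ∈ Finset.range l, S k = (m:ℝ) - 1 - (↑(l-1)) := by
    have hr : Finset.range l = insert 0 (Finset.Icc 1 (l-1)) := by
      ext x; simp; omega
    rw [hr, Finset.sum_insert (by simp), hS0,
      Finset.sum_congr rfl (fun k hk => by
        simp only [Finset.mem_Icc] at hk
        exact hSk k hk.1 (by omega))]
    simp [Nat.card_Icc]
    ring
  have e2 : ∑ k ∈ Finset.range l,
      (∑ j ∈ Finset.Icc 1 (m-1), Real.cos (2*((k:ℝ)+1)*(π*j/m))) = -(l:ℝ) := by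
    have : ∀ k ∈ Finset.range l,
        (∑ j ∈ Finset.Icc 1 (m-1), Real.cos (2*((k:ℝ)+1)*(π*j/m))) = (-1:ℝ) := by
      intro k hk
      simp only [Finset.mem_range] at hk
      have h := hSk (k+1) (by omega) (by omega)
      simp only [hS] at h
      push_cast at h
      exact h
    rw [Finset.sum_congr rfl this]
    simp
  rw [e1, e2]
  push_cast [Nat.cast_sub hl1]
  ring
end

section
/- For complex z with Re z > 0 and real k with 0 < k < 2, the digamma function satisfies the multiplication/Taylor expansion ψ(kz) = ∑_{n=0}^∞ (k-1)^n z^n ψ^{(n)}(z) / n!, where ψ^{(n)} is the n-th polygamma function. -/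
noncomputable def cdigamma (z : ℂ) : ℂ := deriv Complex.Gamma z / Complex.Gamma z

/-- `polygamma n` is the n-th derivative of the digamma function. -/
noncomputable def polygamma (n : ℕ) (z : ℂ) : ℂ := iteratedDeriv n cdigamma z

/-!
On the open ball around `z` of radius `‖z‖`, which avoids the poles `0, -1, -2, …` of `ψ`
when `0 < re z`, the digamma function is holomorphic, so its Taylor series at `z` converges
to it there.
For `0 < k < 2` the point `k z` lies in this ball, and its Taylor term of order `n` is
`(k z - z)ⁿ ψ⁽ⁿ⁾(z) / n! = (k - 1)ⁿ zⁿ ψ⁽ⁿ⁾(z) / n!`.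
-/

open Complex Metric

lemma Complex.norm_le_norm_ofReal_sub {z : ℂ} (hz : 0 ≤ z.re) {x : ℝ} (hx : x ≤ 0) :
    ‖z‖ ≤ ‖(x : ℂ) - z‖ := by
  have hsq : ‖z‖ ^ 2 ≤ ‖(x : ℂ) - z‖ ^ 2 := by
    simp only [Complex.sq_norm, Complex.normSq_apply, sub_re, sub_im, ofReal_re, ofReal_im]
    nlinarith
  exact (pow_le_pow_iff_left₀ (norm_nonneg _) (norm_nonneg _) two_ne_zero).mp hsq

lemma neg_natCast_notMem_ball_norm {z : ℂ} (hz : 0 ≤ z.re) (m : ℕ) :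
    -(m : ℂ) ∉ ball z ‖z‖ := by
  rw [mem_ball, dist_eq_norm, not_lt]
  exact_mod_cast norm_le_norm_ofReal_sub hz (neg_nonpos.mpr m.cast_nonneg)

lemma differentiableOn_cdigamma {U : Set ℂ} (hU : IsOpen U)
    (hU_poles : ∀ w ∈ U, ∀ m : ℕ, w ≠ -m) : DifferentiableOn ℂ cdigamma U := by
  have hGamma : AnalyticOnNhd ℂ Gamma U := DifferentiableOn.analyticOnNhd
    (fun w hw ↦ (differentiableAt_Gamma w (hU_poles w hw)).differentiableWithinAt) hU
  exact fun w hw ↦ ((hGamma.deriv w hw).div (hGamma w hw)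
    (Gamma_ne_zero (hU_poles w hw))).differentiableAt.differentiableWithinAt

lemma ofReal_mul_mem_ball_norm {z : ℂ} (hz : z ≠ 0) {k : ℝ} (hk : |k - 1| < 1) :
    (k : ℂ) * z ∈ ball z ‖z‖ := by
  rw [mem_ball, dist_eq_norm, ← sub_one_mul, norm_mul, ← ofReal_one, ← ofReal_sub, norm_real,
    Real.norm_eq_abs]
  exact mul_lt_of_lt_one_left (norm_pos_iff.mpr hz) hk

theorem digamma_multiplication (z : ℂ) (hz : 0 < z.re) (k : ℝ) (hk0 : 0 < k) (hk2 : k < 2) :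
    HasSum (fun n : ℕ => (k - 1 : ℂ) ^ n * z ^ n * polygamma n z / n.factorial)
      (cdigamma (k * z)) := by
  have hz0 : z ≠ 0 := fun h ↦ hz.ne' (by simp [h])
  have hdiff : DifferentiableOn ℂ cdigamma (ball z ‖z‖) :=
    differentiableOn_cdigamma isOpen_ball fun w hw m hwm ↦
      neg_natCast_notMem_ball_norm hz.le m (hwm ▸ hw)
  have hkz : (k : ℂ) * z ∈ ball z ‖z‖ :=
    ofReal_mul_mem_ball_norm hz0 (abs_sub_lt_iff.mpr ⟨by linarith, by linarith⟩)
  refine (hasSum_taylorSeries_on_ball hdiff hkz).congr_fun fun n ↦ ?_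
  rw [smul_eq_mul, smul_eq_mul, ← sub_one_mul, mul_pow, polygamma]
  field_simp
end

section
/- For Re s > 1, Re a > 0, and real k with 0 < k < 2 (k ≠ 1 allowed), the Hurwitz zeta function satisfies ζ(s, ka) = ∑_{n=0}^∞ C(s+n-1, n)·(1-k)^n·a^n·ζ(s+n, a), where C(s+n-1,n) = (s)_n/n! is the generalized binomial coefficient. -/
/-- Hurwitz zeta function for `Re s > 1`, `Re a > 0`. -/
noncomputable def hurwitzZeta' (s a : ℂ) : ℂ := ∑' n : ℕ, ((n : ℂ) + a) ^ (-s)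

/-!
Let `‖y‖ < ‖a‖`, `m ∈ ℕ` and `x = m + a`. Since `Re x > 0` and `‖y‖ < ‖a‖ ≤ ‖x‖`, we may write
`x - y = x (1 - y / x)` and expand `(1 - y / x) ^ (-s)` by the binomial series:
`(m + a - y) ^ (-s) = ∑ₙ (s)ₙ / n! · yⁿ · (m + a) ^ (-(s + n))`.
The ratio `‖y / (m + a)‖ ≤ ‖y‖ / ‖a‖ < 1` is uniform in `m`, so the double series over
`(n, m)` converges absolutely and may be summed over `m` first, which gives
`ζ(s, a - y) = ∑ₙ (s)ₙ / n! · yⁿ · ζ(s + n, a)`. Truesdell's formula is the case `y = (1 - k) a`.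
-/

open Complex

namespace Complex

lemma mul_cpow_of_re_pos {x y : ℂ} (hx : 0 < x.re) (hy : 0 < y.re) (t : ℂ) :
    (x * y) ^ t = x ^ t * y ^ t := by
  have hx0 : x ≠ 0 := fun h => by simp [h] at hx
  have hy0 : y ≠ 0 := fun h => by simp [h] at hy
  have hx' := abs_lt.1 (abs_arg_lt_pi_div_two_iff.2 (Or.inl hx))
  have hy' := abs_lt.1 (abs_arg_lt_pi_div_two_iff.2 (Or.inl hy))
  rw [cpow_def_of_ne_zero (mul_ne_zero hx0 hy0), cpow_def_of_ne_zero hx0, cpow_def_of_ne_zero hy0,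
    log_mul hx0 hy0 ⟨by linarith, by linarith⟩, add_mul, exp_add]

lemma cpow_neg_add_natCast {x : ℂ} (hx : x ≠ 0) (s : ℂ) (n : ℕ) :
    x ^ (-(s + n)) = x ^ (-s) / x ^ n := by
  rw [neg_add, cpow_add _ _ hx, cpow_neg x (n : ℂ), cpow_natCast, div_eq_mul_inv]

lemma norm_cpow_le_exp_mul_rpow (z w : ℂ) :
    ‖z ^ w‖ ≤ Real.exp (Real.pi * |w.im|) * ‖z‖ ^ w.re := by
  refine (norm_cpow_le z w).trans ?_
  rw [div_eq_inv_mul, ← Real.exp_neg]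
  gcongr
  calc -(z.arg * w.im) ≤ |z.arg| * |w.im| := by rw [← abs_mul]; exact neg_le_abs _
    _ ≤ Real.pi * |w.im| := by gcongr; exact abs_arg_le_pi z

end Complex

lemma Ring.choose_add_natCast_sub_one {K : Type*} [Field K] [CharZero K] (s : K) (n : ℕ) :
    Ring.choose (s + n - 1) n = (ascPochhammer K n).eval s / n.factorial := by
  rw [← Ring.multichoose_eq, eq_div_iff (Nat.cast_ne_zero.2 n.factorial_ne_zero),
    ← Polynomial.ascPochhammer_smeval_eq_eval,
    ← Ring.factorial_nsmul_multichoose_eq_ascPochhammer, nsmul_eq_mul, mul_comm]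

lemma hasFPowerSeriesOnBall_one_sub_cpow_neg (s : ℂ) :
    HasFPowerSeriesOnBall (fun y => (1 - y) ^ (-s))
      (.ofScalars ℂ fun n => (ascPochhammer ℂ n).eval s / n.factorial) 0 1 := by
  simpa [cpow_neg, Ring.choose_add_natCast_sub_one] using
    one_div_one_sub_cpow_hasFPowerSeriesOnBall_zero s

lemma hasSum_ascPochhammer_div_mul_pow (s : ℂ) {y : ℂ} (hy : ‖y‖ < 1) :
    HasSum (fun n => (ascPochhammer ℂ n).eval s / n.factorial * y ^ n) ((1 - y) ^ (-s)) := by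
  have hy' : y ∈ Metric.eball (0 : ℂ) 1 := by
    rw [mem_eball_zero_iff, ← ofReal_norm, ← ENNReal.ofReal_one]
    exact ENNReal.ofReal_lt_ofReal_iff'.2 ⟨hy, one_pos⟩
  simpa [FormalMultilinearSeries.ofScalars_apply_eq, mul_comm] using
    (hasFPowerSeriesOnBall_one_sub_cpow_neg s).hasSum hy'

lemma summable_norm_ascPochhammer_div_mul_pow (s : ℂ) {r : ℝ} (hr0 : 0 ≤ r) (hr : r < 1) :
    Summable fun n => ‖(ascPochhammer ℂ n).eval s / n.factorial‖ * r ^ n := by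
  lift r to NNReal using hr0
  have hradius := (hasFPowerSeriesOnBall_one_sub_cpow_neg s).r_le
  simpa [FormalMultilinearSeries.ofScalars_norm] using
    FormalMultilinearSeries.summable_norm_mul_pow _
      ((ENNReal.coe_lt_one_iff.2 (by exact_mod_cast hr)).trans_le hradius)

section Hurwitz

variable {a : ℂ}

lemma re_natCast_add_pos (ha : 0 < a.re) (m : ℕ) : 0 < ((m : ℂ) + a).re := by
  simp only [add_re, natCast_re]
  positivity

lemma norm_le_norm_natCast_add (ha : 0 < a.re) (m : ℕ) : ‖a‖ ≤ ‖(m : ℂ) + a‖ := by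
  rw [norm_def, norm_def]
  apply Real.sqrt_le_sqrt
  simp only [normSq_apply, add_re, add_im, natCast_re, natCast_im, zero_add]
  nlinarith [m.cast_nonneg (α := ℝ)]

lemma summable_norm_natCast_add_cpow_neg (ha : 0 < a.re) {s : ℂ} (hs : 1 < s.re) :
    Summable fun m : ℕ => ‖((m : ℂ) + a) ^ (-s)‖ := by
  refine .of_nonneg_of_le (fun _ => norm_nonneg _) (fun m => ?_)
    (((Real.summable_one_div_nat_add_rpow a.re s.re).2 hs).mul_left (Real.exp (Real.pi * |s.im|)))
  have hpos : 0 < (m : ℝ) + a.re := by positivity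
  have hle : (m : ℝ) + a.re ≤ ‖(m : ℂ) + a‖ := by
    simpa using re_le_norm ((m : ℂ) + a)
  calc ‖((m : ℂ) + a) ^ (-s)‖ ≤ Real.exp (Real.pi * |s.im|) * ‖(m : ℂ) + a‖ ^ (-s.re) := by
        simpa using norm_cpow_le_exp_mul_rpow ((m : ℂ) + a) (-s)
    _ ≤ Real.exp (Real.pi * |s.im|) * (1 / |(m : ℝ) + a.re| ^ s.re) := by
        rw [abs_of_pos hpos, one_div, ← Real.rpow_neg hpos.le]
        exact mul_le_mul_of_nonneg_left (Real.rpow_le_rpow_of_nonpos hpos hle (by linarith))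
          (Real.exp_pos _).le

lemma hasSum_hurwitzZeta' (ha : 0 < a.re) {s : ℂ} (hs : 1 < s.re) :
    HasSum (fun m : ℕ => ((m : ℂ) + a) ^ (-s)) (hurwitzZeta' s a) :=
  (summable_norm_natCast_add_cpow_neg ha hs).of_norm.hasSum

end Hurwitz

lemma hasSum_sub_cpow_neg (s : ℂ) {x y : ℂ} (hx : 0 < x.re) (hy : ‖y‖ < ‖x‖) :
    HasSum (fun n => (ascPochhammer ℂ n).eval s / n.factorial * y ^ n * x ^ (-(s + n)))
      ((x - y) ^ (-s)) := by
  have hx0 : x ≠ 0 := fun h => by simp [h] at hx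
  have hw : ‖y / x‖ < 1 := by rwa [norm_div, div_lt_one (norm_pos_iff.2 hx0)]
  have hre : 0 < (1 - y / x).re := by
    simpa using (re_le_norm (y / x)).trans_lt hw
  have hsplit : (x - y) ^ (-s) = (1 - y / x) ^ (-s) * x ^ (-s) := by
    rw [show x - y = x * (1 - y / x) by field_simp, mul_cpow_of_re_pos hx hre, mul_comm]
  rw [hsplit]
  refine ((hasSum_ascPochhammer_div_mul_pow s hw).mul_right (x ^ (-s))).congr_fun fun n => ?_
  rw [cpow_neg_add_natCast hx0, div_pow]
  ring

lemma summable_ascPochhammer_div_mul_pow_mul_natCast_add_cpow {s a : ℂ} (hs : 1 < s.re)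
    (ha : 0 < a.re) {y : ℂ} (hy : ‖y‖ < ‖a‖) :
    Summable fun p : ℕ × ℕ => (ascPochhammer ℂ p.1).eval s / p.1.factorial * y ^ p.1 *
      ((p.2 : ℂ) + a) ^ (-(s + p.1)) := by
  set c : ℕ → ℂ := fun n => (ascPochhammer ℂ n).eval s / n.factorial
  have ha0 : 0 < ‖a‖ := hy.trans_le' (norm_nonneg y)
  refine .of_norm_bounded ((summable_norm_ascPochhammer_div_mul_pow s (by positivity)
      ((div_lt_one ha0).2 hy)).mul_of_nonneg (summable_norm_natCast_add_cpow_neg ha hs)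
      (fun _ => by positivity) fun _ => norm_nonneg _) fun ⟨n, m⟩ => ?_
  have hma := norm_le_norm_natCast_add ha m
  calc ‖c n * y ^ n * ((m : ℂ) + a) ^ (-(s + n))‖
      = ‖c n‖ * (‖y‖ / ‖(m : ℂ) + a‖) ^ n * ‖((m : ℂ) + a) ^ (-s)‖ := by
        rw [cpow_neg_add_natCast (norm_pos_iff.1 (ha0.trans_le hma))]
        simp only [norm_mul, norm_div, norm_pow, div_pow]
        ring
    _ ≤ ‖c n‖ * (‖y‖ / ‖a‖) ^ n * ‖((m : ℂ) + a) ^ (-s)‖ := by gcongr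

theorem hasSum_hurwitzZeta'_sub {s a : ℂ} (hs : 1 < s.re) (ha : 0 < a.re) {y : ℂ}
    (hy : ‖y‖ < ‖a‖) :
    HasSum (fun n => (ascPochhammer ℂ n).eval s / n.factorial * y ^ n * hurwitzZeta' (s + n) a)
      (hurwitzZeta' s (a - y)) := by
  let c (n : ℕ) : ℂ := (ascPochhammer ℂ n).eval s / n.factorial
  let F (p : ℕ × ℕ) : ℂ := c p.1 * y ^ p.1 * ((p.2 : ℂ) + a) ^ (-(s + p.1))
  have hF : Summable F := summable_ascPochhammer_div_mul_pow_mul_natCast_add_cpow hs ha hy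
  have hcols (m : ℕ) : HasSum (fun n => F (n, m)) (((m : ℂ) + (a - y)) ^ (-s)) := by
    simpa only [add_sub_assoc] using hasSum_sub_cpow_neg s (re_natCast_add_pos ha m)
      (hy.trans_le (norm_le_norm_natCast_add ha m))
  have hrows (n : ℕ) : HasSum (fun m => F (n, m)) (c n * y ^ n * hurwitzZeta' (s + n) a) := by
    have hsn : 1 < (s + n).re := by
      simpa using hs.trans_le (le_add_of_nonneg_right n.cast_nonneg)
    exact (hasSum_hurwitzZeta' ha hsn).mul_left (c n * y ^ n)
  have hswap : HasSum (F ∘ Equiv.prodComm ℕ ℕ) (∑' p, F p) :=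
    (Equiv.prodComm ℕ ℕ).hasSum_iff.2 hF.hasSum
  have hzeta : hurwitzZeta' s (a - y) = ∑' p, F p := (hswap.prod_fiberwise hcols).tsum_eq
  rw [hzeta]
  exact hF.hasSum.prod_fiberwise hrows

theorem truesdell_multiplication (s a : ℂ) (hs : 1 < s.re) (ha : 0 < a.re)
    (k : ℝ) (hk0 : 0 < k) (hk2 : k < 2) :
    HasSum (fun n : ℕ => ((ascPochhammer ℂ n).eval s / n.factorial) * (1 - k : ℂ) ^ n *
        a ^ n * hurwitzZeta' (s + n) a)
      (hurwitzZeta' s (k * a)) := by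
  have ha0 : 0 < ‖a‖ := norm_pos_iff.2 fun h => by simp [h] at ha
  have hk : ‖(1 - k : ℂ)‖ < 1 := by
    rw [← ofReal_one, ← ofReal_sub, norm_real, Real.norm_eq_abs, abs_lt]
    constructor <;> linarith
  have hy : ‖(1 - k : ℂ) * a‖ < ‖a‖ := by
    rw [norm_mul]
    exact mul_lt_of_lt_one_left ha0 hk
  have h := hasSum_hurwitzZeta'_sub hs ha hy
  rw [show a - (1 - k : ℂ) * a = k * a by ring] at h
  exact h.congr_fun fun n => by rw [mul_pow]; ring
end

section
/- For |x| < 1, the series ∑_{n=1}^∞ ζ(2n+1)·x^{2n+1}/(2n+1) equals -γx + (1/2)[log Γ(1-x) - log Γ(1+x)]. -/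
/-!
Writing `ζ(2n+3) = ∑ⱼ (j+1)^-(2n+3)` turns the series into a double series in `(n, j)`,
absolutely convergent for `|x| < 1`. Summing it over `n` first gives
`∑ⱼ (artanh (x/(j+1)) - x/(j+1))`, and `log (1 ± x/(j+1)) = log (1 ± x + j) - log (j+1)` shows
that its partial sums are half the difference of the Euler–Gauss approximations `logGammaSeq`
of `log Γ(1 - x)` and `log Γ(1 + x)`, plus `x (log N - H_{N+1}) → -γ x`.
-/

open Real Real.BohrMollerup Filter Finset Topology
open scoped Nat

noncomputable def artanhTail (y : ℝ) : ℝ := (log (1 + y) - log (1 - y)) / 2 - y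

lemma hasSum_artanhTail {y : ℝ} (hy : |y| < 1) :
    HasSum (fun n : ℕ => y ^ (2 * (n + 1) + 1) / (2 * (n + 1) + 1)) (artanhTail y) := by
  have h : HasSum (fun k : ℕ => y ^ (2 * k + 1) / (2 * k + 1)) ((log (1 + y) - log (1 - y)) / 2) :=
    ((hasSum_log_sub_log_of_abs_lt_one hy).div_const 2).congr_fun fun k => by field_simp
  rw [← hasSum_nat_add_iff' 1] at h
  simpa [artanhTail] using h

lemma summable_odd_pow_div_nat_succ {x : ℝ} (hx : |x| < 1) :
    Summable (fun p : ℕ × ℕ => (x / (p.2 + 1)) ^ (2 * (p.1 + 1) + 1) / (2 * (p.1 + 1) + 1)) := by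
  have hgeom : Summable (fun n : ℕ => |x| ^ n) :=
    summable_geometric_of_lt_one (abs_nonneg x) hx
  have hzeta : Summable (fun j : ℕ => 1 / ((j : ℝ) + 1) ^ 2) := by
    simpa using (summable_nat_add_iff 1).mpr ((summable_one_div_nat_pow (p := 2)).mpr one_lt_two)
  refine Summable.of_norm_bounded (hgeom.mul_of_nonneg hzeta (fun _ => by positivity)
    (fun _ => by positivity)) fun ⟨n, j⟩ => ?_
  have hj : (1 : ℝ) ≤ j + 1 := by simp
  have hxj : |x| / (j + 1) ≤ 1 := div_le_one_of_le₀ (by linarith) (by positivity)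
  calc ‖(x / (j + 1)) ^ (2 * (n + 1) + 1) / (2 * (n + 1) + 1)‖
      ≤ (|x| / (j + 1)) ^ (2 * (n + 1) + 1) := by
        rw [norm_div, norm_pow, norm_div, Real.norm_eq_abs, Real.norm_eq_abs, Real.norm_eq_abs,
          abs_of_pos (by positivity : (0 : ℝ) < j + 1)]
        exact div_le_self (by positivity) (by rw [abs_of_pos (by positivity)]; linarith)
    _ ≤ (|x| / (j + 1)) ^ (n + 2) := pow_le_pow_of_le_one (by positivity) hxj (by omega)
    _ = |x| ^ n * (|x| ^ 2 / (j + 1) ^ (n + 2)) := by rw [div_pow]; ring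
    _ ≤ |x| ^ n * (1 / ((j : ℝ) + 1) ^ 2) := by
        gcongr
        · nlinarith [abs_nonneg x]
        · omega

lemma hasSum_div_nat_succ_pow (x : ℝ) {k : ℕ} (hk : 1 < k) :
    HasSum (fun j : ℕ => (x / (j + 1)) ^ k) ((∑' j : ℕ, 1 / ((j : ℝ) + 1) ^ k) * x ^ k) := by
  have h : Summable (fun j : ℕ => 1 / ((j : ℝ) + 1) ^ k) := by
    simpa using (summable_nat_add_iff 1).mpr (summable_one_div_nat_pow.mpr hk)
  exact (h.hasSum.mul_right (x ^ k)).congr_fun fun j => by rw [div_pow]; ring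

lemma riemannZeta_natCast_eq_ofReal_tsum {k : ℕ} (hk : 1 < k) :
    riemannZeta k = ((∑' j : ℕ, 1 / ((j : ℝ) + 1) ^ k : ℝ) : ℂ) := by
  rw [zeta_eq_tsum_one_div_nat_add_one_cpow (by simpa using hk), Complex.ofReal_tsum]
  push_cast
  simp [Complex.cpow_natCast]

lemma logGammaSeq_one_add {x : ℝ} (hx : -1 < x) (n : ℕ) :
    logGammaSeq (1 + x) n =
      (1 + x) * log n + log n ! - ∑ m ∈ range (n + 1), (log (m + 1) + log (1 + x / (m + 1))) := by
  rw [logGammaSeq]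
  congr 1
  refine sum_congr rfl fun m _ => ?_
  have hm : (0 : ℝ) < m + 1 := by positivity
  have hxm : 0 < 1 + x / (m + 1) := by
    rw [← neg_lt_iff_pos_add', lt_div_iff₀ hm]
    nlinarith [(m.cast_nonneg : (0 : ℝ) ≤ m)]
  rw [← log_mul hm.ne' hxm.ne']
  congr 1
  field_simp
  ring

lemma sum_artanhTail_div_nat_succ {x : ℝ} (hx : |x| < 1) (n : ℕ) :
    ∑ m ∈ range (n + 1), artanhTail (x / (m + 1)) =
      (logGammaSeq (1 - x) n - logGammaSeq (1 + x) n) / 2 + x * (log n - harmonic (n + 1)) := by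
  obtain ⟨hx₁, hx₂⟩ := abs_lt.mp hx
  have h := logGammaSeq_one_add (x := -x) (by linarith) n
  simp only [neg_div, ← sub_eq_add_neg] at h
  rw [h, logGammaSeq_one_add hx₁, harmonic]
  simp only [artanhTail, sum_add_distrib, sum_sub_distrib, ← sum_div, ← mul_sum,
    div_eq_mul_inv x]
  push_cast
  ring

lemma tendsto_sum_artanhTail_div_nat_succ {x : ℝ} (hx : |x| < 1) :
    Tendsto (fun N : ℕ => ∑ m ∈ range N, artanhTail (x / (m + 1))) atTop
      (𝓝 (-(eulerMascheroniConstant * x) + 1 / 2 * (log (Gamma (1 - x)) - log (Gamma (1 + x))))) := by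
  obtain ⟨hx₁, hx₂⟩ := abs_lt.mp hx
  rw [← tendsto_add_atTop_iff_nat 1]
  simp_rw [sum_artanhTail_div_nat_succ hx]
  have hlog_sub_harmonic :
      Tendsto (fun n : ℕ => log n - harmonic (n + 1)) atTop (𝓝 (-eulerMascheroniConstant)) := by
    have h := ((tendsto_harmonic_sub_log.comp (tendsto_add_atTop_nat 1)).add
      tendsto_log_nat_add_one_sub_log).neg
    rw [add_zero] at h
    refine h.congr fun n => ?_
    simp only [Function.comp_apply]
    push_cast
    ring
  convert (((tendsto_log_gamma (by linarith : 0 < 1 - x)).sub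
    (tendsto_log_gamma (by linarith : 0 < 1 + x))).div_const 2).add
    (hlog_sub_harmonic.const_mul x) using 2
  ring

lemma hasSum_tsum_one_div_pow_mul_odd_pow_div {x : ℝ} (hx : |x| < 1) :
    HasSum (fun n : ℕ =>
        (∑' j : ℕ, 1 / ((j : ℝ) + 1) ^ (2 * (n + 1) + 1)) * x ^ (2 * (n + 1) + 1) / (2 * (n + 1) + 1))
      (-(eulerMascheroniConstant * x) + 1 / 2 * (log (Gamma (1 - x)) - log (Gamma (1 + x)))) := by
  have hF := summable_odd_pow_div_nat_succ hx
  have hxj (j : ℕ) : |x / ((j : ℝ) + 1)| < 1 := by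
    rw [abs_div, abs_of_pos (by positivity : (0 : ℝ) < j + 1), div_lt_one (by positivity)]
    linarith [(j.cast_nonneg : (0 : ℝ) ≤ j)]
  have hcols := ((Equiv.prodComm ℕ ℕ).hasSum_iff.mpr hF.hasSum).prod_fiberwise
    fun j => hasSum_artanhTail (y := x / (j + 1)) (hxj j)
  rw [← tendsto_nhds_unique hcols.tendsto_sum_nat (tendsto_sum_artanhTail_div_nat_succ hx)]
  exact hF.hasSum.prod_fiberwise fun n =>
    (hasSum_div_nat_succ_pow x (k := 2 * (n + 1) + 1) (by omega)).div_const (2 * ((n : ℝ) + 1) + 1)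

theorem zeta_odd_sum (x : ℝ) (hx : |x| < 1) :
    HasSum (fun n : ℕ =>
        riemannZeta (2 * (n + 1) + 1) * (x : ℂ) ^ (2 * (n + 1) + 1) / (2 * (n + 1) + 1))
      (-(Real.eulerMascheroniConstant * x) +
        (1 / 2) * ((Real.log (Real.Gamma (1 - x)) : ℂ) - Real.log (Real.Gamma (1 + x)))) := by
  have h := Complex.hasSum_ofReal.mpr (hasSum_tsum_one_div_pow_mul_odd_pow_div hx)
  convert h using 1
  · ext n
    have hζ := riemannZeta_natCast_eq_ofReal_tsum (k := 2 * (n + 1) + 1) (by omega)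
    push_cast at hζ ⊢
    rw [hζ]
  · push_cast
    ring
end
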